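/- Let Ω ⊆ ℝ^N be open, y : Ω → ℝ^N a map, and x₀ ∈ Ω a point of the geometric domain of y in the following sense: there exist a compact set K ⊆ Ω with x₀ ∈ K and with Lebesgue density 1 at x₀, and a continuously differentiable map w : ℝ^N → ℝ^N with w = y on K and det(Dw(x₀)) ≠ 0, where Dw(x₀) is the Fréchet derivative of w at x₀. Then for every measurable set E ⊆ Ω with Lebesgue density 1 at x₀, the image y(E ∩ K) has Lebesgue density 1 at y(x₀): volume(y(E ∩ K) ∩ B̄(y(x₀), r)) / volume(B̄(y(x₀), r)) → 1 as r → 0⁺. In particular the geometric image im_G(y, E), which contains y(E ∩ K), has density 1 at y(x₀). -/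

import Mathlib

open MeasureTheory Filter Topology Set
open scoped ENNReal

noncomputable section

abbrev Euc (N : ℕ) := EuclideanSpace ℝ (Fin N)

/-- `S` has Lebesgue density `1` at `p`. -/
def DensityOne {N : ℕ} (S : Set (Euc N)) (p : Euc N) : Prop :=
  Tendsto (fun r : ℝ => volume (S ∩ Metric.closedBall p r) / volume (Metric.closedBall p r))
    (𝓝[>] 0) (𝓝 1)

/-! Since `Dw(x₀)` is invertible, `w` has a Lipschitz local inverse near `w x₀`, so every point
of `B(w x₀, r)` missed by `w(E ∩ K)` is the image of a point of `B(x₀, L r)` outside `E ∩ K`.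
Near `x₀`, `w` enlarges outer measure by at most a factor `m`, hence the relative measure of the
complement of `w(E ∩ K)` in `B(w x₀, r)` is at most `m L^N` times that of the complement of
`E ∩ K` in `B(x₀, L r)`, which tends to `0` because `E` and `K` are measurable with density `1`.
Finally `y = w` on `K`. -/

open Metric

theorem HasStrictFDerivAt.exists_compl_image_inter_closedBall_subset
    {E F : Type*} [NormedAddCommGroup E] [NormedSpace ℝ E] [CompleteSpace E]
    [NormedAddCommGroup F] [NormedSpace ℝ F] {f : E → F} {f' : E ≃L[ℝ] F} {a : E}
    (hf : HasStrictFDerivAt f (f' : E →L[ℝ] F) a) :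
    ∃ L : ℝ, 0 < L ∧ ∀ᶠ r in 𝓝 0, ∀ S : Set E,
      (f '' S)ᶜ ∩ closedBall (f a) r ⊆ f '' (Sᶜ ∩ closedBall a (L * r)) := by
  set g := hf.localInverse f f' a
  obtain ⟨K, t, ht, hgK⟩ := hf.to_localInverse.exists_lipschitzOnWith
  obtain ⟨ε, hε, hgood⟩ := nhds_basis_closedBall.eventually_iff.mp
    ((show ∀ᶠ z in 𝓝 (f a), z ∈ t from ht).and hf.eventually_right_inverse)
  refine ⟨K + 1, by positivity, ?_⟩
  filter_upwards [Iic_mem_nhds hε] with r hr S z ⟨hzS, hz⟩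
  obtain ⟨hzt, hfgz⟩ := hgood (closedBall_subset_closedBall hr hz)
  refine ⟨g z, ⟨fun hgzS => hzS ⟨g z, hgzS, hfgz⟩, ?_⟩, hfgz⟩
  have hdist : dist (g z) (g (f a)) ≤ K * dist z (f a) :=
    hgK.dist_le_mul z hzt (f a) (mem_of_mem_nhds ht)
  rw [show g (f a) = a from hf.localInverse_apply_image] at hdist
  rw [mem_closedBall] at hz ⊢
  calc dist (g z) a ≤ K * dist z (f a) := hdist
    _ ≤ (K + 1) * r := by gcongr; linarith

theorem HasStrictFDerivAt.exists_mem_nhds_addHaar_image_le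
    {E : Type*} [NormedAddCommGroup E] [NormedSpace ℝ E] [FiniteDimensional ℝ E]
    [MeasurableSpace E] [BorelSpace E] (μ : Measure E) [μ.IsAddHaarMeasure] {f : E → E}
    {f' : E →L[ℝ] E} {a : E} (hf : HasStrictFDerivAt f f' a) {m : NNReal}
    (hm : ENNReal.ofReal |f'.det| < m) :
    ∃ s ∈ 𝓝 a, ∀ T ⊆ s, μ (f '' T) ≤ m * μ T := by
  obtain ⟨δ, hδ, hδpos⟩ := ((addHaar_image_le_mul_of_det_lt μ f' hm).and self_mem_nhdsWithin).exists
  obtain ⟨s, hs, hfs⟩ := hf.approximates_deriv_on_nhds (Or.inr hδpos)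
  exact ⟨s, hs, fun T hT => hδ T f (hfs.mono_set hT)⟩

section Density

variable {N : ℕ}

def densityRatio (S : Set (Euc N)) (p : Euc N) (r : ℝ) : ℝ≥0∞ :=
  volume (S ∩ closedBall p r) / volume (closedBall p r)

def DensityZero (S : Set (Euc N)) (p : Euc N) : Prop :=
  Tendsto (densityRatio S p) (𝓝[>] 0) (𝓝 0)

variable {S T : Set (Euc N)} {p : Euc N} {r : ℝ}

theorem densityRatio_le_one : densityRatio S p r ≤ 1 :=
  ENNReal.div_le_of_le_mul <| (one_mul (volume (closedBall p r))).symm ▸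
    measure_mono inter_subset_right

theorem densityRatio_union_le :
    densityRatio (S ∪ T) p r ≤ densityRatio S p r + densityRatio T p r := by
  rw [densityRatio, union_inter_distrib_right, densityRatio, densityRatio, ← ENNReal.add_div]
  exact ENNReal.div_le_div_right (measure_union_le _ _) _

theorem one_le_densityRatio_add_compl (hr : 0 < r) :
    1 ≤ densityRatio S p r + densityRatio Sᶜ p r := by
  rw [densityRatio, densityRatio, ← ENNReal.add_div, ENNReal.le_div_iff_mul_le
    (.inl (measure_closedBall_pos volume p hr).ne') (.inl measure_closedBall_lt_top.ne), one_mul]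
  calc volume (closedBall p r) = volume (S ∩ closedBall p r ∪ Sᶜ ∩ closedBall p r) := by
        rw [← union_inter_distrib_right, union_compl_self, univ_inter]
    _ ≤ _ := measure_union_le _ _

theorem densityRatio_add_compl (hS : MeasurableSet S) (hr : 0 < r) :
    densityRatio S p r + densityRatio Sᶜ p r = 1 := by
  rw [densityRatio, densityRatio, ← ENNReal.add_div, ← measure_union'
    (disjoint_compl_right.mono inter_subset_left inter_subset_left)
    (hS.inter measurableSet_closedBall), ← union_inter_distrib_right, union_compl_self, univ_inter,
    ENNReal.div_self (measure_closedBall_pos volume p hr).ne' measure_closedBall_lt_top.ne]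

theorem DensityZero.union (hS : DensityZero S p) (hT : DensityZero T p) :
    DensityZero (S ∪ T) p :=
  tendsto_of_tendsto_of_tendsto_of_le_of_le tendsto_const_nhds (by simpa using hS.add hT)
    (fun _ => zero_le) fun _ => densityRatio_union_le

theorem densityOne_of_densityZero_compl (h : DensityZero Sᶜ p) : DensityOne S p := by
  have hlow : Tendsto (fun r => 1 - densityRatio Sᶜ p r) (𝓝[>] 0) (𝓝 1) := by
    simpa using ENNReal.Tendsto.sub tendsto_const_nhds h (.inl ENNReal.one_ne_top)
  refine tendsto_of_tendsto_of_tendsto_of_le_of_le' hlow tendsto_const_nhds ?_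
    (.of_forall fun _ => densityRatio_le_one)
  filter_upwards [self_mem_nhdsWithin] with r hr
  exact tsub_le_iff_right.mpr (one_le_densityRatio_add_compl hr)

theorem DensityOne.densityZero_compl (h : DensityOne S p) (hS : MeasurableSet S) :
    DensityZero Sᶜ p := by
  have hsub : Tendsto (fun r => 1 - densityRatio S p r) (𝓝[>] 0) (𝓝 0) := by
    have h : Tendsto (densityRatio S p) (𝓝[>] 0) (𝓝 1) := h
    simpa using ENNReal.Tendsto.sub tendsto_const_nhds h (.inl ENNReal.one_ne_top)
  refine hsub.congr' ?_
  filter_upwards [self_mem_nhdsWithin] with r hr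
  exact (ENNReal.eq_sub_of_add_eq (densityRatio_le_one.trans_lt ENNReal.one_lt_top).ne
    ((add_comm _ _).trans (densityRatio_add_compl hS hr))).symm

theorem DensityZero.of_eventually_le_mul {U : Set (Euc N)} {q : Euc N} (hT : DensityZero T p)
    {L : ℝ} (hL : 0 < L) {m : ℝ≥0∞} (hm : m ≠ ⊤)
    (h : ∀ᶠ r in 𝓝[>] 0, volume (U ∩ closedBall q r) ≤ m * volume (T ∩ closedBall p (L * r))) :
    DensityZero U q := by
  set c := ENNReal.ofReal (L ^ Module.finrank ℝ (Euc N))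
  have hc : c ≠ 0 := (ENNReal.ofReal_pos.2 (by positivity)).ne'
  have hscale (r : ℝ) (hr : 0 < r) :
      volume (closedBall p (L * r)) = c * volume (closedBall q r) := by
    rw [Measure.addHaar_closedBall _ _ (by positivity), Measure.addHaar_closedBall _ _ hr.le,
      mul_pow, ENNReal.ofReal_mul (by positivity), mul_assoc]
  have hmul : Tendsto (L * ·) (𝓝[>] 0) (𝓝[>] 0) :=
    tendsto_nhdsWithin_of_tendsto_nhds_of_eventually_within _
      (by simpa using ((continuous_const_mul L).tendsto 0).mono_left nhdsWithin_le_nhds)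
      (eventually_nhdsWithin_of_forall fun r (hr : 0 < r) => mul_pos hL hr)
  have hlim : Tendsto (fun r => m * c * densityRatio T p (L * r)) (𝓝[>] 0) (𝓝 0) := by
    simpa using ENNReal.Tendsto.const_mul (hT.comp hmul)
      (.inr (ENNReal.mul_ne_top hm ENNReal.ofReal_ne_top))
  refine tendsto_of_tendsto_of_tendsto_of_le_of_le' tendsto_const_nhds hlim
    (.of_forall fun _ => zero_le) ?_
  filter_upwards [h, self_mem_nhdsWithin] with r hr (hr0 : 0 < r)
  calc densityRatio U q r ≤ m * volume (T ∩ closedBall p (L * r)) / volume (closedBall q r) :=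
        ENNReal.div_le_div_right hr _
    _ = m * c * densityRatio T p (L * r) := by
        rw [densityRatio, hscale r hr0, mul_assoc, ← mul_div_assoc,
          ENNReal.mul_div_mul_left _ _ hc ENNReal.ofReal_ne_top, mul_div_assoc]

theorem HasStrictFDerivAt.densityZero_compl_image {w : Euc N → Euc N} {A : Euc N ≃L[ℝ] Euc N}
    {a : Euc N} (hw : HasStrictFDerivAt w (A : Euc N →L[ℝ] Euc N) a) (hS : DensityZero Sᶜ a) :
    DensityZero (w '' S)ᶜ (w a) := by
  set m : NNReal := Real.toNNReal |(A : Euc N →L[ℝ] Euc N).det| + 1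
  obtain ⟨s, hs, himage⟩ :=
    hw.exists_mem_nhds_addHaar_image_le volume (m := m) (ENNReal.coe_lt_coe.2 (lt_add_one _))
  obtain ⟨L, hL, hcover⟩ := hw.exists_compl_image_inter_closedBall_subset
  have hball : ∀ᶠ r in 𝓝 0, closedBall a (L * r) ⊆ s :=
    ((continuous_const_mul L).tendsto' 0 0 (mul_zero L)).eventually
      (eventually_closedBall_subset hs)
  refine hS.of_eventually_le_mul hL (ENNReal.coe_ne_top (r := m)) ?_
  filter_upwards [nhdsWithin_le_nhds (hcover.and hball)] with r ⟨hcov, hsub⟩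
  calc volume ((w '' S)ᶜ ∩ closedBall (w a) r)
      ≤ volume (w '' (Sᶜ ∩ closedBall a (L * r))) := measure_mono (hcov S)
    _ ≤ m * volume (Sᶜ ∩ closedBall a (L * r)) := himage _ (inter_subset_right.trans hsub)

end Density

theorem density_of_geometric_image_general {N : ℕ}
    (Ω : Set (Euc N))
    (y : Euc N → Euc N) (x₀ : Euc N)
    (K : Set (Euc N)) (hK : IsCompact K) (hx₀K : x₀ ∈ K)
    (hKdens : DensityOne K x₀)
    (w : Euc N → Euc N) (hw : ContDiff ℝ 1 w) (hwy : Set.EqOn w y K)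
    (hdet : (fderiv ℝ w x₀).det ≠ 0) :
    ∀ E : Set (Euc N), MeasurableSet E → E ⊆ Ω → DensityOne E x₀ →
      DensityOne (y '' (E ∩ K)) (y x₀) := by
  intro E hE _ hEdens
  have hEK : DensityZero (E ∩ K)ᶜ x₀ := by
    rw [compl_inter]
    exact (hEdens.densityZero_compl hE).union (hKdens.densityZero_compl hK.measurableSet)
  have hstrict : HasStrictFDerivAt w
      ((fderiv ℝ w x₀).toContinuousLinearEquivOfDetNeZero hdet : Euc N →L[ℝ] Euc N) x₀ := by
    rw [ContinuousLinearMap.coe_toContinuousLinearEquivOfDetNeZero]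
    exact hw.contDiffAt.hasStrictFDerivAt one_ne_zero
  rw [← (hwy.mono inter_subset_right).image_eq, ← hwy hx₀K]
  exact densityOne_of_densityZero_compl (hstrict.densityZero_compl_image hEK)

/-- Density of the geometric image at images of points of the geometric domain:
if `x₀` belongs to the geometric domain of `y` (witnessed by a compact set `K` of
density `1` at `x₀` and a `C¹` map `w` agreeing with `y` on `K`, with nonvanishing
Jacobian at `x₀`), then for every measurable `E ⊆ Ω` of density `1` at `x₀`, the
image `y(E ∩ K)` has density `1` at `y(x₀)`. -/
theorem density_of_geometric_image {N : ℕ} (hN : 2 ≤ N)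
    (Ω : Set (Euc N)) (hΩ : IsOpen Ω)
    (y : Euc N → Euc N) (x₀ : Euc N) (hx₀ : x₀ ∈ Ω)
    (K : Set (Euc N)) (hK : IsCompact K) (hKΩ : K ⊆ Ω) (hx₀K : x₀ ∈ K)
    (hKdens : DensityOne K x₀)
    (w : Euc N → Euc N) (hw : ContDiff ℝ 1 w) (hwy : Set.EqOn w y K)
    (hdet : (fderiv ℝ w x₀).det ≠ 0) :
    ∀ E : Set (Euc N), MeasurableSet E → E ⊆ Ω → DensityOne E x₀ →
      DensityOne (y '' (E ∩ K)) (y x₀) :=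
  density_of_geometric_image_general Ω y x₀ K hK hx₀K hKdens w hw hwy hdet
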